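/- Let k ≥ 2 and let L ⊆ (Σ_k²)^* be accepted by a DFA with n states, where no word of L begins with the digit pair [0,0] and every word x ∈ L satisfies [π₂(x)]_k > 0. If there exists x ∈ L with [π₁(x)]_k ≥ k^n · [π₂(x)]_k, then sup { [π₁(x)]_k / [π₂(x)]_k : x ∈ L } = ∞, i.e., the set of quotients is unbounded. -/

import Mathlib

/-!
Write `v₁, v₂` for the values of the two tracks. A witness `x` with `k ^ n * v₂ x ≤ v₁ x` is longer
than `n`, so the pumping lemma splits it as `a b c` with `|a b| ≤ n`. The second track of `a b`
must consist of zeros: otherwise `v₂ x ≥ k ^ |c|` and `v₁ x ≥ k ^ (n + |c|) ≥ k ^ |x|`, which no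
word of length `|x|` reaches. Hence pumping `b` leaves `v₂ = v₂ c > 0` fixed, while the leading
digit pair of `a b`, whose second digit is `0`, has a nonzero first digit, so `v₁` of
`a bⁱ⁺¹ c` is at least `k ^ i`.
-/

/-- The base-k value of a word of digits, most significant digit first. -/
def baseVal (k : ℕ) (w : List (Fin k)) : ℕ :=
  w.foldl (fun acc d => acc * k + d.val) 0

variable {k : ℕ}

theorem foldl_baseVal (w : List (Fin k)) (acc : ℕ) :
    w.foldl (fun a d => a * k + d.val) acc = acc * k ^ w.length + baseVal k w := by
  induction w generalizing acc with
  | nil => simp [baseVal]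
  | cons d w ih =>
    simp only [List.foldl_cons, baseVal, List.length_cons] at ih ⊢
    rw [ih, ih (0 * k + d.val)]
    ring

theorem baseVal_append (u v : List (Fin k)) :
    baseVal k (u ++ v) = baseVal k u * k ^ v.length + baseVal k v := by
  rw [baseVal, List.foldl_append, foldl_baseVal]
  rfl

theorem baseVal_cons (d : Fin k) (w : List (Fin k)) :
    baseVal k (d :: w) = d.val * k ^ w.length + baseVal k w := by
  simpa [baseVal] using baseVal_append [d] w

theorem baseVal_lt_pow_length (w : List (Fin k)) : baseVal k w < k ^ w.length := by
  induction w with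
  | nil => simp [baseVal]
  | cons d w ih =>
    rw [baseVal_cons, List.length_cons, pow_succ]
    nlinarith [d.isLt]

theorem baseVal_eq_zero_iff {w : List (Fin k)} : baseVal k w = 0 ↔ ∀ d ∈ w, d.val = 0 := by
  induction w with
  | nil => simp [baseVal]
  | cons d w ih => simp [baseVal_cons, ih, d.pos.ne']

theorem baseVal_append_of_forall_val_eq_zero {u : List (Fin k)} (hu : ∀ d ∈ u, d.val = 0)
    (v : List (Fin k)) : baseVal k (u ++ v) = baseVal k v := by
  rw [baseVal_append, baseVal_eq_zero_iff.2 hu, zero_mul, zero_add]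

theorem pow_length_le_baseVal_cons {d : Fin k} (hd : d.val ≠ 0) (w : List (Fin k)) :
    k ^ w.length ≤ baseVal k (d :: w) := by
  rw [baseVal_cons]
  exact Nat.le_add_right_of_le (Nat.le_mul_of_pos_left _ (Nat.pos_of_ne_zero hd))

theorem lt_length_of_pow_le_baseVal (hk : 1 < k) {n : ℕ} {w : List (Fin k)}
    (h : k ^ n ≤ baseVal k w) : n < w.length :=
  (pow_lt_pow_iff_right₀ hk).1 (h.trans_lt (baseVal_lt_pow_length w))

open Computability in
theorem Language.append_flatten_replicate_append_mem {α : Type*} {l : Language α}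
    {a b c : List α} (h : {a} * {b}∗ * {c} ≤ l) (i : ℕ) :
    a ++ (List.replicate i b).flatten ++ c ∈ l :=
  h <| append_mem_mul (append_mem_mul rfl <| join_mem_kstar fun _ hy ↦ List.eq_of_mem_replicate hy)
    rfl

theorem forall_snd_val_eq_zero_of_pow_mul_le {n : ℕ} {u c : List (Fin k × Fin k)}
    (hu : u.length ≤ n)
    (h : k ^ n * baseVal k ((u ++ c).map Prod.snd) ≤ baseVal k ((u ++ c).map Prod.fst)) :
    ∀ d ∈ u, d.2.val = 0 := by
  by_contra! ⟨d, hdu, hd⟩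
  have hk : 0 < k := d.2.pos
  have hu2 : 1 ≤ baseVal k (u.map Prod.snd) := Nat.one_le_iff_ne_zero.2 fun h0 ↦
    hd (baseVal_eq_zero_iff.1 h0 _ (List.mem_map_of_mem hdu))
  have hbig : k ^ (u ++ c).length ≤ baseVal k ((u ++ c).map Prod.fst) := calc
    k ^ (u ++ c).length ≤ k ^ n * k ^ c.length := by
      rw [← pow_add, List.length_append]
      exact Nat.pow_le_pow_right hk (by omega)
    _ ≤ k ^ n * baseVal k ((u ++ c).map Prod.snd) := by
      rw [List.map_append, baseVal_append, List.length_map]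
      gcongr
      exact Nat.le_add_right_of_le (Nat.le_mul_of_pos_left _ hu2)
    _ ≤ _ := h
  exact (baseVal_lt_pow_length _).not_ge (by rwa [List.length_map])

theorem baseVal_snd_pumped {a b : List (Fin k × Fin k)} (hzero : ∀ d ∈ a ++ b, d.2.val = 0)
    (c : List (Fin k × Fin k)) (i : ℕ) :
    baseVal k ((a ++ (List.replicate i b).flatten ++ c).map Prod.snd) =
      baseVal k (c.map Prod.snd) := by
  rw [List.map_append]
  refine baseVal_append_of_forall_val_eq_zero ?_ _
  intro e he
  obtain ⟨d, hd, rfl⟩ := List.mem_map.1 he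
  rcases List.mem_append.1 hd with hda | hdb
  · exact hzero d (List.mem_append_left b hda)
  · obtain ⟨l, hl, hdl⟩ := List.mem_flatten.1 hdb
    rw [List.eq_of_mem_replicate hl] at hdl
    exact hzero d (List.mem_append_right a hdl)

theorem pow_le_baseVal_fst_pumped {a b t : List (Fin k × Fin k)} {d : Fin k × Fin k}
    (hb : b ≠ []) (hab : a ++ b = d :: t) (hd : d.1.val ≠ 0) (c : List (Fin k × Fin k))
    (i : ℕ) : k ^ i ≤ baseVal k ((a ++ (List.replicate (i + 1) b).flatten ++ c).map Prod.fst) := by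
  have hword : a ++ (List.replicate (i + 1) b).flatten ++ c =
      d :: (t ++ (List.replicate i b).flatten ++ c) := by
    rw [List.replicate_succ, List.flatten_cons, ← List.append_assoc, hab]
    simp
  have hlen : i ≤ (t ++ (List.replicate i b).flatten ++ c).length := by
    simp only [List.length_append, List.length_flatten, List.map_replicate, List.sum_replicate,
      smul_eq_mul]
    nlinarith [List.length_pos_iff.2 hb]
  rw [hword, List.map_cons]
  calc k ^ i ≤ k ^ ((t ++ (List.replicate i b).flatten ++ c).map Prod.fst).length := by
        rw [List.length_map]
        exact Nat.pow_le_pow_right d.1.pos hlen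
    _ ≤ _ := pow_length_le_baseVal_cons hd _

theorem sup_quotient_infinite (k : ℕ) (hk : 2 ≤ k) (σ : Type) [Fintype σ] (n : ℕ)
    (hn : Fintype.card σ = n) (M : DFA (Fin k × Fin k) σ)
    (L : Language (Fin k × Fin k)) (hL : M.accepts = L)
    (hlead : ∀ x ∈ L, ∀ (d : Fin k × Fin k) (y : List (Fin k × Fin k)),
      x = d :: y → d.1.val ≠ 0 ∨ d.2.val ≠ 0)
    (hpos : ∀ x ∈ L, 0 < baseVal k (x.map Prod.snd))
    (hbig : ∃ x ∈ L, k ^ n * baseVal k (x.map Prod.snd) ≤ baseVal k (x.map Prod.fst)) :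
    ¬ BddAbove { r : ℝ | ∃ x ∈ L,
      r = (baseVal k (x.map Prod.fst) : ℝ) / (baseVal k (x.map Prod.snd) : ℝ) } := by
  obtain ⟨x, hxL, hx⟩ := hbig
  have hlen : n < x.length := by
    simpa using lt_length_of_pow_le_baseVal hk ((Nat.le_mul_of_pos_right _ (hpos x hxL)).trans hx)
  obtain ⟨a, b, c, rfl, hab, hb, hpump⟩ := M.pumping_lemma (hL ▸ hxL) (hn ▸ hlen.le)
  have hmem (i : ℕ) : a ++ (List.replicate i b).flatten ++ c ∈ L :=
    hL ▸ Language.append_flatten_replicate_append_mem hpump i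
  have hzero : ∀ d ∈ a ++ b, d.2.val = 0 :=
    forall_snd_val_eq_zero_of_pow_mul_le (by simpa [hn] using hab) hx
  obtain ⟨d, t, hdt⟩ := List.exists_cons_of_ne_nil (List.append_ne_nil_of_right_ne_nil a hb)
  have hd : d.1.val ≠ 0 := (hlead _ hxL d (t ++ c) (by rw [hdt, List.cons_append])).resolve_right
    (not_not.2 (hzero d (hdt ▸ List.mem_cons_self)))
  have hC : 0 < baseVal k (c.map Prod.snd) := baseVal_snd_pumped hzero c 0 ▸ hpos _ (hmem 0)
  rw [not_bddAbove_iff]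
  intro B
  obtain ⟨i, hi⟩ := pow_unbounded_of_one_lt (B * baseVal k (c.map Prod.snd))
    (by exact_mod_cast hk : (1 : ℝ) < k)
  refine ⟨_, ⟨_, hmem (i + 1), rfl⟩, ?_⟩
  rw [baseVal_snd_pumped hzero, lt_div_iff₀ (by exact_mod_cast hC)]
  exact hi.trans_le (by exact_mod_cast pow_le_baseVal_fst_pumped hb hdt hd c i)
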